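/- Let R be a ring such that for every pair of nonisomorphic simple right R-modules S and T one has Ext^1_R(S,T) = {0}. If M and N are isotypic right R-modules of finite length with Hom_R(M,N) = {0}, then Ext^1_R(M,N) = {0}. -/

import Mathlib

universe u

open CategoryTheory

/-- `Ext¹_A(S, T) = 0`, formulated via the `Ext` functor on the category of `A`-modules.
Right `R`-modules are treated as modules over `A = Rᵐᵒᵖ`. -/
def Ext1IsZero (A : Type u) [Ring A] (S T : Type u) [AddCommGroup S] [Module A S]
    [AddCommGroup T] [Module A T] : Prop :=
  Subsingleton (((Ext ℤ (ModuleCat.{u} A) 1).obj (Opposite.op (ModuleCat.of A S))).obj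
    (ModuleCat.of A T))

/-- The endomorphism ring of the `A`-module `M` is a division ring:
it is nontrivial and every nonzero endomorphism is invertible. -/
def EndIsDivisionRing (A : Type*) [Ring A] (M : Type*) [AddCommGroup M] [Module A M] : Prop :=
  Nontrivial (Module.End A M) ∧ ∀ f : Module.End A M, f ≠ 0 → IsUnit f

/-- The `A`-module `M` is isotypic: all of its simple subquotients are isomorphic. -/
def IsIsotypic' (A : Type*) [Ring A] (M : Type*) [AddCommGroup M] [Module A M] : Prop :=
  ∀ (p₁ p₂ : Submodule A M) (q₁ : Submodule A p₁) (q₂ : Submodule A p₂),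
    IsSimpleModule A (p₁ ⧸ q₁) → IsSimpleModule A (p₂ ⧸ q₂) →
      Nonempty ((p₁ ⧸ q₁) ≃ₗ[A] (p₂ ⧸ q₂))

/-!
Through the long exact `Ext`-sequences, the class of modules `X` with `Ext¹(X, Y) = 0` is closed
under extensions, and so is the class of modules `Y` with `Ext¹(X, Y) = 0`. Dévissage along
composition series in both variables reduces the claim to `Ext¹(S, T) = 0` for simple subquotients
`S` of `M` and `T` of `N`. Isotypicity makes `S` isomorphic to a simple quotient of `M` and `T` to
a simple submodule of `N`; an isomorphism `S ≅ T` would thus give a nonzero map `M → N`.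
-/

universe w v

open Limits Opposite

namespace CategoryTheory

namespace ProjectiveResolution

variable {C : Type u} [Category.{v} C] [Abelian C] {X : C} (P : ProjectiveResolution X)

lemma subsingleton_ext_one_iff {R : Type*} [Ring R] [Linear R C] [EnoughProjectives C] (Y : C) :
    Subsingleton (((Ext R C 1).obj (op X)).obj Y) ↔
      ∀ f : P.complex.X 1 ⟶ Y, P.complex.d 2 1 ≫ f = 0 →
        ∃ g : P.complex.X 0 ⟶ Y, P.complex.d 1 0 ≫ g = f := by
  rw [← ModuleCat.isZero_iff_subsingleton, (P.isoExt 1 Y).isZero_iff,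
    ← HomologicalComplex.exactAt_iff_isZero_homology,
    HomologicalComplex.exactAt_iff' _ 0 1 2 (by simp) (by simp), ShortComplex.moduleCat_exact_iff]
  rfl

variable (X) in
/-- The target of `P.π.f 0` is `X` only up to defeq; naming it `X` keeps `Ext S.X₃ Y` syntactically
equal to `Ext X Y`. -/
noncomputable abbrev kernelShortComplex : ShortComplex C :=
  ShortComplex.mk (X₃ := X) (kernel.ι (P.π.f 0)) (P.π.f 0) (kernel.condition _)

lemma shortExact_kernelShortComplex : P.kernelShortComplex.ShortExact where
  exact := ShortComplex.exact_of_f_is_kernel _ (kernelIsKernel _)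
  epi_g := inferInstanceAs (Epi (P.π.f 0))

/-- `P₁ ⟶ ker π` is the cokernel of `P₂ ⟶ P₁`, so the `1`-cocycles of `Hom(P, Y)` are the maps
`ker π ⟶ Y`, and the coboundaries are those extending to `P₀`. -/
lemma forall_exists_d_comp_eq_iff (Y : C) :
    (∀ f : P.complex.X 1 ⟶ Y, P.complex.d 2 1 ≫ f = 0 →
        ∃ g : P.complex.X 0 ⟶ Y, P.complex.d 1 0 ≫ g = f) ↔
      ∀ h : kernel (P.π.f 0) ⟶ Y, ∃ g : P.complex.X 0 ⟶ Y, kernel.ι (P.π.f 0) ≫ g = h := by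
  let e : P.complex.X 1 ⟶ kernel (P.π.f 0) := kernel.lift _ _ P.complex_d_comp_π_f_zero
  have : Epi e := P.exact₀.epi_kernelLift
  have hd₁ : e ≫ kernel.ι _ = P.complex.d 1 0 := kernel.lift_ι _ _ _
  let S : ShortComplex C := ShortComplex.mk (P.complex.d 2 1) e
    (by rw [← cancel_mono (kernel.ι (P.π.f 0)), Category.assoc, hd₁, zero_comp]; simp)
  let φ : S ⟶ ShortComplex.mk _ _ (P.complex.d_comp_d 2 1 0) :=
    ShortComplex.homMk (𝟙 _) (𝟙 _) (kernel.ι _) (by simp [S]) (by simpa [S] using hd₁.symm)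
  have : Epi φ.τ₁ := inferInstanceAs (Epi (𝟙 _))
  have : IsIso φ.τ₂ := inferInstanceAs (IsIso (𝟙 _))
  have : Mono φ.τ₃ := inferInstanceAs (Mono (kernel.ι _))
  have hS : S.Exact := (ShortComplex.exact_iff_of_epi_of_isIso_of_mono φ).2 (P.exact_succ 0)
  constructor
  · intro H h
    obtain ⟨g, hg⟩ := H (e ≫ h) (by rw [← Category.assoc, S.zero, zero_comp])
    exact ⟨g, by rwa [← cancel_epi e, ← Category.assoc, hd₁]⟩
  · intro H f hf
    obtain ⟨g, hg⟩ := H (hS.desc f hf)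
    exact ⟨g, by rw [← hd₁, Category.assoc, hg, hS.g_desc]⟩

end ProjectiveResolution

variable {C : Type u} [Category.{v} C] [Abelian C] [HasExt.{w} C]

namespace Abelian.Ext

lemma subsingleton_of_isZero_left {X : C} (hX : IsZero X) (Y : C) (n : ℕ) :
    Subsingleton (Ext.{w} X Y n) :=
  subsingleton_of_forall_eq 0 fun e => by
    rw [← mk₀_id_comp e, hX.eq_of_src (𝟙 X) 0, mk₀_zero, zero_comp]

lemma subsingleton_of_isZero_right (X : C) {Y : C} (hY : IsZero Y) (n : ℕ) :
    Subsingleton (Ext.{w} X Y n) :=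
  subsingleton_of_forall_eq 0 fun e => by
    rw [← comp_mk₀_id e, hY.eq_of_src (𝟙 Y) 0, mk₀_zero, comp_zero]

end Abelian.Ext

namespace ShortComplex.ShortExact

open Abelian

variable {S : ShortComplex C} (hS : S.ShortExact)
include hS

lemma subsingleton_ext_X₂_left {Y : C} {n : ℕ} (h₁ : Subsingleton (Ext.{w} S.X₁ Y n))
    (h₃ : Subsingleton (Ext.{w} S.X₃ Y n)) : Subsingleton (Ext.{w} S.X₂ Y n) :=
  subsingleton_of_forall_eq 0 fun x => by
    obtain ⟨x₃, rfl⟩ := Ext.contravariant_sequence_exact₂ hS Y x (Subsingleton.elim _ _)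
    rw [Subsingleton.elim x₃ 0, Ext.comp_zero]

lemma subsingleton_ext_X₂_right {X : C} {n : ℕ} (h₁ : Subsingleton (Ext.{w} X S.X₁ n))
    (h₃ : Subsingleton (Ext.{w} X S.X₃ n)) : Subsingleton (Ext.{w} X S.X₂ n) :=
  subsingleton_of_forall_eq 0 fun x => by
    obtain ⟨x₁, rfl⟩ := Ext.covariant_sequence_exact₂ X hS x (Subsingleton.elim _ _)
    rw [Subsingleton.elim x₁ 0, Ext.zero_comp]

lemma subsingleton_ext_one_iff [Projective S.X₂] (Y : C) :
    Subsingleton (Ext.{w} S.X₃ Y 1) ↔ ∀ h : S.X₁ ⟶ Y, ∃ g : S.X₂ ⟶ Y, S.f ≫ g = h := by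
  constructor
  · intro _ h
    obtain ⟨x₂, hx₂⟩ := Ext.contravariant_sequence_exact₁ hS Y (Ext.mk₀ h) (add_zero 1)
      (Subsingleton.elim _ _)
    obtain ⟨g, rfl⟩ := (Ext.mk₀_bijective _ _).2 x₂
    exact ⟨g, (Ext.mk₀_bijective _ _).1 (by rwa [Ext.mk₀_comp_mk₀] at hx₂)⟩
  · intro H
    refine subsingleton_of_forall_eq 0 fun x => ?_
    obtain ⟨x₁, rfl⟩ := Ext.contravariant_sequence_exact₃ hS Y x
      (Ext.eq_zero_of_projective _) (add_zero 1)
    obtain ⟨h, rfl⟩ := (Ext.mk₀_bijective _ _).2 x₁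
    obtain ⟨g, rfl⟩ := H h
    rw [← Ext.mk₀_comp_mk₀, ← Ext.comp_assoc_of_third_deg_zero, hS.extClass_comp, Ext.zero_comp]

end ShortComplex.ShortExact

/-- For `0 ⟶ K ⟶ P₀ ⟶ X ⟶ 0` with `P₀` projective, both groups vanish iff every `K ⟶ Y` extends
to `P₀`. -/
theorem subsingleton_ext_one_iff_subsingleton_abelianExt {R : Type*} [Ring R] [Linear R C]
    [EnoughProjectives C] (X Y : C) :
    Subsingleton (((_root_.Ext R C 1).obj (op X)).obj Y) ↔
      Subsingleton (Abelian.Ext.{w} X Y 1) := by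
  let P := projectiveResolution X
  exact (P.subsingleton_ext_one_iff Y).trans <| (P.forall_exists_d_comp_eq_iff Y).trans
    (P.shortExact_kernelShortComplex.subsingleton_ext_one_iff Y).symm

end CategoryTheory

section Ext1IsZero

variable {A : Type u} [Ring A] {M X Y : Type u} [AddCommGroup M] [Module A M]
  [AddCommGroup X] [Module A X] [AddCommGroup Y] [Module A Y]

theorem ext1IsZero_iff_subsingleton_ext :
    Ext1IsZero A X Y ↔ Subsingleton (Abelian.Ext (ModuleCat.of A X) (ModuleCat.of A Y) 1) :=
  subsingleton_ext_one_iff_subsingleton_abelianExt _ _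

lemma ext1IsZero_of_subsingleton_left [Subsingleton X] : Ext1IsZero A X Y :=
  ext1IsZero_iff_subsingleton_ext.2 <|
    Abelian.Ext.subsingleton_of_isZero_left (ModuleCat.isZero_of_subsingleton _) _ _

lemma ext1IsZero_of_subsingleton_right [Subsingleton Y] : Ext1IsZero A X Y :=
  ext1IsZero_iff_subsingleton_ext.2 <|
    Abelian.Ext.subsingleton_of_isZero_right _ (ModuleCat.isZero_of_subsingleton _) _

lemma Submodule.shortExact_subtype_mkQ (N : Submodule A M) :
    (ModuleCat.shortComplexOfCompEqZero N.subtype N.mkQ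
      (LinearMap.exact_subtype_mkQ N).linearMap_comp_eq_zero).ShortExact :=
  ModuleCat.shortComplex_shortExact _ (LinearMap.exact_subtype_mkQ N) N.injective_subtype
    N.mkQ_surjective

lemma ext1IsZero_of_submodule_left (N : Submodule A M) (h₁ : Ext1IsZero A N Y)
    (h₃ : Ext1IsZero A (M ⧸ N) Y) : Ext1IsZero A M Y := by
  rw [ext1IsZero_iff_subsingleton_ext] at *
  exact N.shortExact_subtype_mkQ.subsingleton_ext_X₂_left h₁ h₃

lemma ext1IsZero_of_submodule_right (N : Submodule A Y) (h₁ : Ext1IsZero A X N)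
    (h₃ : Ext1IsZero A X (Y ⧸ N)) : Ext1IsZero A X Y := by
  rw [ext1IsZero_iff_subsingleton_ext] at *
  exact N.shortExact_subtype_mkQ.subsingleton_ext_X₂_right h₁ h₃

end Ext1IsZero

def IsSubquotient (A : Type*) [Ring A] (M T : Type*) [AddCommGroup M] [Module A M]
    [AddCommGroup T] [Module A T] : Prop :=
  ∃ (p : Submodule A M) (q : Submodule A p), Nonempty (T ≃ₗ[A] p ⧸ q)

section Subquotient

variable {A : Type*} [Ring A] {M M' T T' : Type*} [AddCommGroup M] [Module A M]
  [AddCommGroup M'] [Module A M'] [AddCommGroup T] [Module A T] [AddCommGroup T'] [Module A T']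

lemma isSubquotient_of_surjective (f : M →ₗ[A] T) (hf : Function.Surjective f) :
    IsSubquotient A M T :=
  ⟨⊤, LinearMap.ker (f ∘ₗ Submodule.subtype ⊤),
    ⟨(LinearMap.quotKerEquivOfSurjective _ fun t => by
      obtain ⟨m, rfl⟩ := hf t; exact ⟨⟨m, trivial⟩, rfl⟩).symm⟩⟩

lemma isSubquotient_of_injective (f : T →ₗ[A] M) (hf : Function.Injective f) :
    IsSubquotient A M T :=
  ⟨LinearMap.range f, ⊥,
    ⟨(LinearEquiv.ofInjective f hf).trans (Submodule.quotEquivOfEqBot ⊥ rfl).symm⟩⟩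

lemma IsSubquotient.trans_injective (h : IsSubquotient A M T) (f : M →ₗ[A] M')
    (hf : Function.Injective f) : IsSubquotient A M' T := by
  obtain ⟨p, q, ⟨e⟩⟩ := h
  let e₁ : p ≃ₗ[A] p.map f := Submodule.equivMapOfInjective f hf p
  exact ⟨p.map f, q.map (e₁ : p →ₗ[A] p.map f), ⟨e.trans (Submodule.Quotient.equiv q _ e₁ rfl)⟩⟩

lemma IsIsotypic'.nonempty_linearEquiv (hM : IsIsotypic' A M) (h : IsSubquotient A M T)
    (h' : IsSubquotient A M T') [IsSimpleModule A T] [IsSimpleModule A T'] :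
    Nonempty (T ≃ₗ[A] T') := by
  obtain ⟨p, q, ⟨e⟩⟩ := h
  obtain ⟨p', q', ⟨e'⟩⟩ := h'
  obtain ⟨e₀⟩ := hM p p' q q' (IsSimpleModule.congr e.symm) (IsSimpleModule.congr e'.symm)
  exact ⟨(e.trans e₀).trans e'.symm⟩

end Subquotient

section FiniteLength

variable {A : Type u} [Ring A] {M X Y : Type u} [AddCommGroup M] [Module A M]
  [AddCommGroup X] [Module A X] [AddCommGroup Y] [Module A Y]

theorem IsFiniteLength.induction_on_simple_subquotients
    {P : ∀ (M : Type u) [AddCommGroup M] [Module A M], Prop}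
    (subsingleton : ∀ (M : Type u) [AddCommGroup M] [Module A M] [Subsingleton M], P M)
    (extension : ∀ (M : Type u) [AddCommGroup M] [Module A M] (N : Submodule A M),
      P N → P (M ⧸ N) → P M)
    (hM : IsFiniteLength A M)
    (simple : ∀ (S : Type u) [AddCommGroup S] [Module A S], IsSimpleModule A S →
      IsSubquotient A M S → P S) :
    P M := by
  induction hM with
  | of_subsingleton => exact subsingleton _
  | @of_simple_quotient M _ _ N _ _ ih =>
    refine extension M N (ih fun S _ _ hS hSN => simple S hS ?_)
      (simple _ inferInstance (isSubquotient_of_surjective N.mkQ N.mkQ_surjective))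
    exact hSN.trans_injective N.subtype N.injective_subtype

lemma IsFiniteLength.exists_isSimpleModule_quotient (hM : IsFiniteLength A M) [Nontrivial M] :
    ∃ N : Submodule A M, IsSimpleModule A (M ⧸ N) := by
  have := (isFiniteLength_iff_isNoetherian_isArtinian.mp hM).1
  simpa only [isSimpleModule_iff_isCoatom] using IsCoatomic.exists_coatom (Submodule A M)

lemma IsFiniteLength.exists_isSimpleModule_submodule (hM : IsFiniteLength A M) [Nontrivial M] :
    ∃ N : Submodule A M, IsSimpleModule A N := by
  have := (isFiniteLength_iff_isNoetherian_isArtinian.mp hM).2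
  simpa only [isSimpleModule_iff_isAtom] using IsAtomic.exists_atom (Submodule A M)

lemma ext1IsZero_of_isFiniteLength_left (hX : IsFiniteLength A X)
    (h : ∀ (S : Type u) [AddCommGroup S] [Module A S], IsSimpleModule A S →
      IsSubquotient A X S → Ext1IsZero A S Y) :
    Ext1IsZero A X Y :=
  hX.induction_on_simple_subquotients (P := fun X [AddCommGroup X] [Module A X] => Ext1IsZero A X Y)
    (fun _ _ _ _ => ext1IsZero_of_subsingleton_left)
    (fun _ _ _ N h₁ h₃ => ext1IsZero_of_submodule_left N h₁ h₃) h

lemma ext1IsZero_of_isFiniteLength_right (hY : IsFiniteLength A Y)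
    (h : ∀ (T : Type u) [AddCommGroup T] [Module A T], IsSimpleModule A T →
      IsSubquotient A Y T → Ext1IsZero A X T) :
    Ext1IsZero A X Y :=
  hY.induction_on_simple_subquotients (P := fun Y [AddCommGroup Y] [Module A Y] => Ext1IsZero A X Y)
    (fun _ _ _ _ => ext1IsZero_of_subsingleton_right)
    (fun _ _ _ N h₁ h₃ => ext1IsZero_of_submodule_right N h₁ h₃) h

end FiniteLength

/-- Assume `Ext¹_R(S, T) = 0` for every pair of nonisomorphic simple right
`R`-modules.  If `M` and `N` are isotypic right `R`-modules of finite length with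
`Hom_R(M, N) = 0`, then `Ext¹_R(M, N) = 0`. -/
theorem ext1IsZero_of_isotypic_of_hom_eq_zero (R : Type u) [Ring R]
    (hext : ∀ (S T : Type u) [AddCommGroup S] [Module Rᵐᵒᵖ S] [AddCommGroup T] [Module Rᵐᵒᵖ T],
      IsSimpleModule Rᵐᵒᵖ S → IsSimpleModule Rᵐᵒᵖ T → IsEmpty (S ≃ₗ[Rᵐᵒᵖ] T) →
      Ext1IsZero Rᵐᵒᵖ S T)
    (M N : Type u) [AddCommGroup M] [Module Rᵐᵒᵖ M] [AddCommGroup N] [Module Rᵐᵒᵖ N]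
    (hM : IsIsotypic' Rᵐᵒᵖ M) (hN : IsIsotypic' Rᵐᵒᵖ N)
    (hMfl : IsFiniteLength Rᵐᵒᵖ M) (hNfl : IsFiniteLength Rᵐᵒᵖ N)
    (hhom : ∀ f : M →ₗ[Rᵐᵒᵖ] N, f = 0) :
    Ext1IsZero Rᵐᵒᵖ M N := by
  rcases subsingleton_or_nontrivial M with _ | _
  · exact ext1IsZero_of_subsingleton_left
  rcases subsingleton_or_nontrivial N with _ | _
  · exact ext1IsZero_of_subsingleton_right
  obtain ⟨M₀, _⟩ := hMfl.exists_isSimpleModule_quotient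
  obtain ⟨N₀, _⟩ := hNfl.exists_isSimpleModule_submodule
  have hM₀N₀ : IsEmpty ((M ⧸ M₀) ≃ₗ[Rᵐᵒᵖ] N₀) := ⟨fun e => by
    have := IsSimpleModule.nontrivial Rᵐᵒᵖ (M ⧸ M₀)
    obtain ⟨x, hx⟩ := exists_ne (0 : M ⧸ M₀)
    obtain ⟨m, rfl⟩ := M₀.mkQ_surjective x
    refine hx (e.map_eq_zero_iff.1 (Subtype.ext ?_))
    exact LinearMap.congr_fun (hhom (N₀.subtype ∘ₗ e.toLinearMap ∘ₗ M₀.mkQ)) m⟩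
  refine ext1IsZero_of_isFiniteLength_left hMfl fun S _ _ hS hSM => ?_
  refine ext1IsZero_of_isFiniteLength_right hNfl fun T _ _ hT hTN => ?_
  refine hext S T hS hT ⟨fun e => ?_⟩
  obtain ⟨e₁⟩ := hM.nonempty_linearEquiv (isSubquotient_of_surjective M₀.mkQ M₀.mkQ_surjective) hSM
  obtain ⟨e₂⟩ :=
    hN.nonempty_linearEquiv hTN (isSubquotient_of_injective N₀.subtype N₀.injective_subtype)
  exact hM₀N₀.false (e₁.trans (e.trans e₂))
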